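/- Suppose A, P are n×n real matrices, P has nonnegative entries, PA is an M-matrix (positive diagonal, nonpositive off-diagonal, strictly diagonally dominant). Then A is invertible and A^{-1} has nonnegative entries. -/
import Mathlib

theorem stmt_14 (n : ℕ) (A P : Matrix (Fin n) (Fin n) ℝ)
    (hP : ∀ i j, 0 ≤ P i j)
    (hdiag : ∀ i, 0 < (P * A) i i)
    (hoff : ∀ i j, i ≠ j → (P * A) i j ≤ 0)
    (hdd : ∀ i, ∑ j ∈ Finset.univ.erase i, |(P * A) i j| < (P * A) i i) :
    IsUnit A.det ∧ ∀ i j, 0 ≤ A⁻¹ i j := by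
  set M := P * A with hM
  have hMdet : M.det ≠ 0 := by
    apply det_ne_zero_of_sum_row_lt_diag
    intro k
    have := hdd k
    simp only [Real.norm_eq_abs]
    calc ∑ j ∈ Finset.univ.erase k, |M k j| < M k k := this
      _ ≤ |M k k| := le_abs_self _
  have hAdet : A.det ≠ 0 := by
    intro h
    apply hMdet
    rw [hM, Matrix.det_mul, h, mul_zero]
  -- M⁻¹ is entrywise nonnegative
  have hMinv : ∀ i j, 0 ≤ M⁻¹ i j := by
    intro i j
    set x : Fin n → ℝ := fun k => M⁻¹ k j with hx
    have hMx : ∀ i', (0:ℝ) ≤ ∑ k, M i' k * x k := by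
      intro i'
      have h1 : (M * M⁻¹) i' j = (1 : Matrix (Fin n) (Fin n) ℝ) i' j := by
        rw [Matrix.mul_nonsing_inv M (isUnit_iff_ne_zero.mpr hMdet)]
      rw [Matrix.mul_apply] at h1
      rw [show (∑ k, M i' k * x k) = (1 : Matrix (Fin n) (Fin n) ℝ) i' j from h1]
      by_cases h : i' = j <;> simp [Matrix.one_apply, h]
    -- take minimizing index
    obtain ⟨i0, -, hi0⟩ := Finset.exists_min_image Finset.univ x ⟨i, Finset.mem_univ i⟩
    have hx0 : 0 ≤ x i0 := by
      by_contra hneg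
      push_neg at hneg
      have key : ∑ k, M i0 k * x k ≤ x i0 * (M i0 i0 + ∑ k ∈ Finset.univ.erase i0, M i0 k) := by
        rw [← Finset.add_sum_erase _ _ (Finset.mem_univ i0)]
        rw [mul_add, Finset.mul_sum]
        apply add_le_add (le_of_eq (mul_comm _ _))
        apply Finset.sum_le_sum
        intro k hk
        have hk' : k ≠ i0 := (Finset.mem_erase.mp hk).1
        have h1 : M i0 k ≤ 0 := hoff i0 k (Ne.symm hk')
        have h2 : x i0 ≤ x k := hi0 k (Finset.mem_univ k)
        calc M i0 k * x k ≤ M i0 k * x i0 := mul_le_mul_of_nonpos_left h2 h1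
          _ = x i0 * M i0 k := mul_comm _ _
      have hpos : 0 < M i0 i0 + ∑ k ∈ Finset.univ.erase i0, M i0 k := by
        have := hdd i0
        have habs : ∑ k ∈ Finset.univ.erase i0, (-(M i0 k)) ≤
            ∑ k ∈ Finset.univ.erase i0, |M i0 k| := by
          apply Finset.sum_le_sum
          intro k hk
          exact neg_le_abs _
        rw [Finset.sum_neg_distrib] at habs
        linarith
      have : x i0 * (M i0 i0 + ∑ k ∈ Finset.univ.erase i0, M i0 k) < 0 :=
        mul_neg_of_neg_of_pos hneg hpos
      have := hMx i0
      linarith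
    exact le_trans hx0 (hi0 i (Finset.mem_univ i))
  refine ⟨isUnit_iff_ne_zero.mpr hAdet, ?_⟩
  have hAinv : A⁻¹ = M⁻¹ * P := by
    apply Matrix.inv_eq_left_inv
    rw [Matrix.mul_assoc, ← hM, Matrix.nonsing_inv_mul M (isUnit_iff_ne_zero.mpr hMdet)]
  intro i j
  rw [hAinv, Matrix.mul_apply]
  apply Finset.sum_nonneg
  intro k _
  exact mul_nonneg (hMinv i k) (hP k j)
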